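/- arXiv:1606.07863 — 7 statements merged into one kernel-verified Lean document; each statement's English description precedes it below -/
import Mathlib

section
/- Weak duality for the matroid bipartite matching convex program: let G = (L,R,E) be a finite bipartite graph and f a nonnegative monotone submodular set function on subsets of L. If x : E → [0,∞) is a fractional matroid matching with respect to f, and y : L → [0,1], z : R → [0,∞) satisfy y_u + z_v ≥ 1 for every edge (u,v) ∈ E, then ∑_{(u,v)∈E} x_{uv} ≤ f̂(y) + ∑_{v∈R} z_v, where f̂ is the Lovász extension of f. -/
open Finset

/-- The Lovász extension of a set function `f` on subsets of a finite type `L`: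
`f̂(y) = ∫₀¹ f({u : y u ≥ t}) dt`. -/
noncomputable def lovasz {L : Type*} [Fintype L] (f : Finset L → ℝ) (y : L → ℝ) : ℝ :=
  ∫ t in (0:ℝ)..1, f (Finset.univ.filter fun u => t ≤ y u)

/-- Weak duality for the matroid bipartite matching convex program. -/
theorem stmt0 {L R : Type*} [Fintype L] [Fintype R] [DecidableEq L] [DecidableEq R]
    (E : Finset (L × R)) (f : Finset L → ℝ)
    (hf_nonneg : ∀ S : Finset L, 0 ≤ f S)
    (hf_mono : ∀ A B : Finset L, A ⊆ B → f A ≤ f B)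
    (hf_submod : ∀ A B : Finset L, f (A ∪ B) + f (A ∩ B) ≤ f A + f B)
    -- `x` is a fractional matroid matching with respect to `f`
    (x : L × R → ℝ)
    (hx_nonneg : ∀ e ∈ E, 0 ≤ x e)
    (hx_right : ∀ v : R, ∑ u ∈ Finset.univ.filter (fun u => (u, v) ∈ E), x (u, v) ≤ 1)
    (hx_left : ∀ S : Finset L,
      ∑ u ∈ S, ∑ v ∈ Finset.univ.filter (fun v => (u, v) ∈ E), x (u, v) ≤ f S)
    -- dual variables
    (y : L → ℝ) (hy : ∀ u, y u ∈ Set.Icc (0:ℝ) 1)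
    (z : R → ℝ) (hz : ∀ v, 0 ≤ z v)
    (hcover : ∀ e ∈ E, 1 ≤ y e.1 + z e.2) :
    ∑ e ∈ E, x e ≤ lovasz f y + ∑ v : R, z v := by
  classical
  set X : L → ℝ := fun u => ∑ v ∈ Finset.univ.filter (fun v => (u, v) ∈ E), x (u, v) with hX
  have hXnn : ∀ u, 0 ≤ X u := fun u =>
    Finset.sum_nonneg fun v hv => hx_nonneg _ (by simpa using hv)
  -- split a sum over E as double sum
  have key : ∀ g : L × R → ℝ, ∑ e ∈ E, g e
      = ∑ u : L, ∑ v ∈ Finset.univ.filter (fun v => (u, v) ∈ E), g (u, v) := by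
    intro g
    have : E = Finset.univ.filter (fun e : L × R => e ∈ E) := by
      simp
    rw [this, Finset.sum_filter, Fintype.sum_prod_type]
    simp [Finset.sum_filter]
  -- step 1
  have step1 : ∑ e ∈ E, x e ≤ ∑ u : L, y u * X u + ∑ v : R, z v := by
    have h1 : ∑ e ∈ E, x e ≤ ∑ e ∈ E, (x e * y e.1 + x e * z e.2) := by
      apply Finset.sum_le_sum
      intro e he
      have := hcover e he
      have hxe := hx_nonneg e he
      nlinarith
    rw [Finset.sum_add_distrib] at h1
    have h2 : ∑ e ∈ E, x e * y e.1 = ∑ u : L, y u * X u := by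
      rw [key]
      simp [hX, Finset.mul_sum, mul_comm]
    have h3 : ∑ e ∈ E, x e * z e.2 ≤ ∑ v : R, z v := by
      have keyR : ∀ g : L × R → ℝ, ∑ e ∈ E, g e
          = ∑ v : R, ∑ u ∈ Finset.univ.filter (fun u => (u, v) ∈ E), g (u, v) := by
        intro g
        have : E = Finset.univ.filter (fun e : L × R => e ∈ E) := by simp
        rw [this, Finset.sum_filter, Fintype.sum_prod_type_right]
        simp [Finset.sum_filter]
      rw [keyR]
      calc ∑ v : R, ∑ u ∈ Finset.univ.filter (fun u => (u, v) ∈ E), x (u, v) * z v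
          = ∑ v : R, (∑ u ∈ Finset.univ.filter (fun u => (u, v) ∈ E), x (u, v)) * z v := by
            simp [Finset.sum_mul]
        _ ≤ ∑ v : R, 1 * z v := by
            apply Finset.sum_le_sum
            intro v _
            exact mul_le_mul_of_nonneg_right (hx_right v) (hz v)
        _ = ∑ v : R, z v := by simp
    linarith
  -- step 2 : ∑ y u * X u ≤ lovasz f y
  have step2 : ∑ u : L, y u * X u ≤ lovasz f y := by
    -- integral of each indicator
    have hind : ∀ u : L, ∫ t in (0:ℝ)..1, (if t ≤ y u then X u else 0) = y u * X u := by
      intro u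
      have h1 : (fun t => if t ≤ y u then X u else 0)
          = Set.indicator {t : ℝ | t ≤ y u} (fun _ => X u) := by
        ext t; simp [Set.indicator_apply]
      rw [h1, intervalIntegral.integral_indicator (by exact ⟨(hy u).1, (hy u).2⟩)]
      simp [mul_comm]
    have hintg : ∀ u : L, IntervalIntegrable (fun t => if t ≤ y u then X u else 0)
        MeasureTheory.volume 0 1 := by
      intro u
      apply Antitone.intervalIntegrable
      intro s t hst
      by_cases h : t ≤ y u
      · simp [h, le_trans hst h]
      · by_cases h' : s ≤ y u <;> simp [h, h', hXnn u]
    have hsum : ∑ u : L, y u * X u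
        = ∫ t in (0:ℝ)..1, ∑ u : L, (if t ≤ y u then X u else 0) := by
      rw [intervalIntegral.integral_finset_sum (fun u _ => hintg u)]
      simp [hind]
    rw [hsum]
    unfold lovasz
    have hInt1 : IntervalIntegrable (fun t => ∑ u : L, if t ≤ y u then X u else 0)
        MeasureTheory.volume 0 1 := by
      apply Antitone.intervalIntegrable
      intro s t hst
      apply Finset.sum_le_sum
      intro u _
      by_cases h : t ≤ y u
      · simp [h, le_trans hst h]
      · by_cases h' : s ≤ y u <;> simp [h, h', hXnn u]
    have hInt2 : IntervalIntegrable
        (fun t => f (Finset.univ.filter fun u => t ≤ y u)) MeasureTheory.volume 0 1 := by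
      apply Antitone.intervalIntegrable
      intro s t hst
      apply hf_mono
      intro u hu
      simp only [Finset.mem_filter, Finset.mem_univ, true_and] at hu ⊢
      exact le_trans hst hu
    apply intervalIntegral.integral_mono_on (by norm_num) hInt1 hInt2
    intro t _
    calc ∑ u : L, (if t ≤ y u then X u else 0)
        = ∑ u ∈ Finset.univ.filter (fun u => t ≤ y u), X u := by
          rw [Finset.sum_filter]
      _ ≤ f (Finset.univ.filter fun u => t ≤ y u) := hx_left _
  linarith
end

section
/- Charging lemma: let F(s) = ∫₀^s (1−t)/(t+α) dt. Let X be a finite set, a ∈ [0,1], and let y_u ∈ [0,a] for each u ∈ X satisfy ∑_{u∈X} (a − y_u) = a + α. Then 1 − a ≤ ∑_{u∈X} (F(a) − F(y_u)). -/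
open Finset

/-- The constant `α = 1/(e-1)`, so that `1 + α = 1/(1 - 1/e)`. -/
noncomputable def alpha : ℝ := 1 / (Real.exp 1 - 1)

/-- `F(s) = ∫₀^s (1-t)/(t+α) dt`. -/
noncomputable def F (s : ℝ) : ℝ := ∫ t in (0:ℝ)..s, (1 - t) / (t + alpha)

lemma alpha_pos : 0 < alpha := by
  have h : 1 + 1 < Real.exp 1 := by
    have := Real.add_one_lt_exp (x := 1) one_ne_zero
    linarith
  unfold alpha
  apply div_pos one_pos
  linarith

lemma f_contOn (b : ℝ) (hb : 0 ≤ b) :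
    ContinuousOn (fun t : ℝ => (1 - t) / (t + alpha)) (Set.uIcc 0 b) := by
  apply ContinuousOn.div
  · fun_prop
  · fun_prop
  · intro t ht
    rw [Set.uIcc_of_le hb] at ht
    have := alpha_pos
    have := ht.1
    positivity

lemma key (a yy : ℝ) (h0 : 0 ≤ yy) (hya : yy ≤ a) (ha1 : a ≤ 1) :
    (1 - a) / (a + alpha) * (a - yy) ≤ F a - F yy := by
  have ha0 : (0:ℝ) ≤ a := le_trans h0 hya
  have hap : 0 < a + alpha := by have := alpha_pos; linarith
  have hInta : IntervalIntegrable (fun t : ℝ => (1 - t) / (t + alpha))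
      MeasureTheory.volume 0 a := (f_contOn a ha0).intervalIntegrable
  have hInty : IntervalIntegrable (fun t : ℝ => (1 - t) / (t + alpha))
      MeasureTheory.volume 0 yy := by
    apply ((f_contOn a ha0).mono _).intervalIntegrable
    rw [Set.uIcc_of_le ha0, Set.uIcc_of_le h0]
    exact Set.Icc_subset_Icc le_rfl hya
  have hsub : F a - F yy = ∫ t in yy..a, (1 - t) / (t + alpha) := by
    unfold F
    rw [intervalIntegral.integral_interval_sub_left hInta hInty]
  rw [hsub]
  have hIntya : IntervalIntegrable (fun t : ℝ => (1 - t) / (t + alpha))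
      MeasureTheory.volume yy a := by
    apply ((f_contOn a ha0).mono _).intervalIntegrable
    rw [Set.uIcc_of_le ha0, Set.uIcc_of_le hya]
    exact Set.Icc_subset_Icc h0 le_rfl
  have hconst : (1 - a) / (a + alpha) * (a - yy)
      = ∫ _ in yy..a, (1 - a) / (a + alpha) := by
    rw [intervalIntegral.integral_const, smul_eq_mul]
    ring
  rw [hconst]
  apply intervalIntegral.integral_mono_on hya intervalIntegrable_const hIntya
  intro t ht
  have ht0 : 0 ≤ t := le_trans h0 ht.1
  have htp : 0 < t + alpha := by have := alpha_pos; linarith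
  rw [div_le_div_iff₀ hap htp]
  nlinarith [alpha_pos, ht.2]

/-- Charging lemma: if `y_u ∈ [0, a]` for each `u ∈ X` and `∑_{u∈X} (a - y_u) = a + α`,
then `1 - a ≤ ∑_{u∈X} (F(a) - F(y_u))`. -/
theorem stmt3 {ι : Type*} (X : Finset ι) (a : ℝ) (ha : a ∈ Set.Icc (0:ℝ) 1)
    (y : ι → ℝ) (hy : ∀ u ∈ X, y u ∈ Set.Icc (0:ℝ) a)
    (hsum : ∑ u ∈ X, (a - y u) = a + alpha) :
    1 - a ≤ ∑ u ∈ X, (F a - F (y u)) := by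
  have hap : 0 < a + alpha := by have := alpha_pos; have := ha.1; linarith
  have h1 : ∑ u ∈ X, (1 - a) / (a + alpha) * (a - y u)
      ≤ ∑ u ∈ X, (F a - F (y u)) := by
    apply Finset.sum_le_sum
    intro u hu
    exact key a (y u) (hy u hu).1 (hy u hu).2 ha.2
  calc 1 - a = (1 - a) / (a + alpha) * (a + alpha) := by field_simp
    _ = ∑ u ∈ X, (1 - a) / (a + alpha) * (a - y u) := by
        rw [← Finset.mul_sum, hsum]
    _ ≤ _ := h1
end

section
/- Greedy point of the base polyhedron: let f be a nonnegative monotone submodular set function on subsets of a finite set Ω with |Ω| = n, and fix a bijection σ : {1,…,n} → Ω. Define x_{σ(k)} = f({σ(1),…,σ(k)}) − f({σ(1),…,σ(k−1)}) for 1 ≤ k ≤ n. Then ∑_{u∈S} x_u ≤ f(S) for every S ⊆ Ω. -/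
open Finset

/-! Order the ground set by `σ` and add the elements of `S` in that order. When the next element
`a` of `S` is added, everything already in `S` lies in the prefix `P` of elements preceding `a`, so
by diminishing returns its greedy weight `f (insert a P) - f P` is at most its marginal value in
`S`. Summing these marginals telescopes to `f S - f ∅ ≤ f S`. -/

section Submodular

variable {Ω : Type*} [DecidableEq Ω] {f : Finset Ω → ℝ}

theorem marginal_le_marginal_of_subset
    (hf : ∀ A B : Finset Ω, f (A ∪ B) + f (A ∩ B) ≤ f A + f B)
    {a : Ω} {T P : Finset Ω} (ha : a ∉ P) (hTP : T ⊆ P) :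
    f (insert a P) - f P ≤ f (insert a T) - f T := by
  have hunion : insert a T ∪ P = insert a P := by
    rw [insert_union, union_eq_right.mpr hTP]
  have hinter : insert a T ∩ P = T := by
    rw [insert_inter_of_notMem ha, inter_eq_left.mpr hTP]
  have := hf (insert a T) P
  rw [hunion, hinter] at this
  linarith

theorem sum_greedy_le_of_submodular [Fintype Ω] {α : Type*} [LinearOrder α]
    (hf : ∀ A B : Finset Ω, f (A ∪ B) + f (A ∩ B) ≤ f A + f B) (hf_empty : 0 ≤ f ∅)
    (r : Ω → α) (hr : Function.Injective r) (x : Ω → ℝ)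
    (hx : ∀ u, x u = f (univ.filter fun v => r v ≤ r u) - f (univ.filter fun v => r v < r u))
    (S : Finset Ω) : ∑ u ∈ S, x u ≤ f S := by
  induction S using induction_on_max_value r with
  | empty => simpa using hf_empty
  | insert a s ha hmax ih =>
    set P := univ.filter fun v => r v < r a
    have haP : a ∉ P := by simp [P]
    have hsP : s ⊆ P := fun v hv =>
      mem_filter.mpr ⟨mem_univ v, (hmax v hv).lt_of_ne (hr.ne (ne_of_mem_of_not_mem hv ha))⟩
    have hprefix : (univ.filter fun v => r v ≤ r a) = insert a P := by
      ext v
      simp only [mem_filter, mem_univ, true_and, mem_insert, P, le_iff_lt_or_eq, hr.eq_iff]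
      tauto
    have hxa : x a ≤ f (insert a s) - f s := by
      rw [hx, hprefix]
      exact marginal_le_marginal_of_subset hf haP hsP
    rw [sum_insert ha]
    linarith

end Submodular

theorem stmt5_general {Ω : Type*} [Fintype Ω] [DecidableEq Ω] (n : ℕ)
    (f : Finset Ω → ℝ)
    (hf_nonneg : ∀ S : Finset Ω, 0 ≤ f S)
    (hf_submod : ∀ A B : Finset Ω, f (A ∪ B) + f (A ∩ B) ≤ f A + f B)
    (σ : Fin n ≃ Ω) (x : Ω → ℝ)
    (hx : ∀ k : Fin n, x (σ k) =
      f ((Finset.univ.filter fun j : Fin n => j ≤ k).image σ) -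
      f ((Finset.univ.filter fun j : Fin n => j < k).image σ)) :
    ∀ S : Finset Ω, ∑ u ∈ S, x u ≤ f S := by
  have prefix_eq (p : Fin n → Fin n → Prop) [DecidableRel p] (k : Fin n) :
      (univ.filter fun j => p j k).image σ = univ.filter fun v => p (σ.symm v) k := by
    ext v
    simp only [mem_image, mem_filter, mem_univ, true_and]
    exact ⟨fun ⟨j, hj, hjv⟩ => hjv ▸ by simpa using hj, fun hv => ⟨σ.symm v, hv, by simp⟩⟩
  refine sum_greedy_le_of_submodular hf_submod (hf_nonneg ∅) σ.symm σ.symm.injective x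
    fun u => ?_
  simpa only [prefix_eq, σ.apply_symm_apply] using hx (σ.symm u)

/-- Greedy point of the base polyhedron: given a bijection `σ : Fin n ≃ Ω`, the greedy
solution `x (σ k) = f({σ 0, …, σ k}) - f({σ 0, …, σ (k-1)})` satisfies
`∑_{u ∈ S} x u ≤ f S` for every `S ⊆ Ω`. -/
theorem stmt5 {Ω : Type*} [Fintype Ω] [DecidableEq Ω] (n : ℕ) (hn : Fintype.card Ω = n)
    (f : Finset Ω → ℝ)
    (hf_nonneg : ∀ S : Finset Ω, 0 ≤ f S)
    (hf_mono : ∀ A B : Finset Ω, A ⊆ B → f A ≤ f B)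
    (hf_submod : ∀ A B : Finset Ω, f (A ∪ B) + f (A ∩ B) ≤ f A + f B)
    (σ : Fin n ≃ Ω) (x : Ω → ℝ)
    (hx : ∀ k : Fin n, x (σ k) =
      f ((Finset.univ.filter fun j : Fin n => j ≤ k).image σ) -
      f ((Finset.univ.filter fun j : Fin n => j < k).image σ)) :
    ∀ S : Finset Ω, ∑ u ∈ S, x u ≤ f S :=
  stmt5_general n f hf_nonneg hf_submod σ x hx
end

section
/- Charging density lemma for the bar chart: let f be a nonnegative monotone submodular set function on subsets of a finite set L, let a ∈ [0,1], X ⊆ L, and y ∈ [0,1]^L, and define y' ∈ [0,1]^L by y'_u = max(y_u, a) for u ∈ X and y'_u = y_u for u ∉ X. Suppose that a = 1 or f̂(y') − f̂(y) = a + α. Then ∫₀¹ ((1−t)/(t+α)) · (f(L'(t)) − f(L(t))) dt ≥ 1 − a, where L(t) = {u ∈ L : y_u ≥ t} and L'(t) = {u ∈ L : y'_u ≥ t}. -/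
open Finset

/-- Charging density lemma for the bar chart: raising the coordinates in `X` to at least
`a`, if `a = 1` or the Lovász extension increases by exactly `a + α`, then the charge
`∫₀¹ (1-t)/(t+α) · (f(L'(t)) - f(L(t))) dt` is at least `1 - a`. -/
theorem stmt8 {L : Type*} [Fintype L] [DecidableEq L] (f : Finset L → ℝ)
    (hf_nonneg : ∀ S : Finset L, 0 ≤ f S)
    (hf_mono : ∀ A B : Finset L, A ⊆ B → f A ≤ f B)
    (hf_submod : ∀ A B : Finset L, f (A ∪ B) + f (A ∩ B) ≤ f A + f B)
    (a : ℝ) (ha : a ∈ Set.Icc (0:ℝ) 1) (X : Finset L)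
    (y : L → ℝ) (hy : ∀ u, y u ∈ Set.Icc (0:ℝ) 1)
    (y' : L → ℝ) (hy' : ∀ u, y' u = if u ∈ X then max (y u) a else y u)
    (hcase : a = 1 ∨ lovasz f y' - lovasz f y = a + alpha) :
    1 - a ≤ ∫ t in (0:ℝ)..1, ((1 - t) / (t + alpha)) *
      (f (Finset.univ.filter fun u => t ≤ y' u) -
        f (Finset.univ.filter fun u => t ≤ y u)) := by
  have hα := alpha_pos
  obtain ⟨ha0, ha1⟩ := ha
  set F : ℝ → ℝ := fun t => f (Finset.univ.filter fun u => t ≤ y u) with hF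
  set F' : ℝ → ℝ := fun t => f (Finset.univ.filter fun u => t ≤ y' u) with hF'
  have hy'y : ∀ u, y u ≤ y' u := by
    intro u; rw [hy' u]; split
    · exact le_max_left _ _
    · exact le_rfl
  have hFle : ∀ t, F t ≤ F' t := by
    intro t
    apply hf_mono
    intro u hu
    simp only [mem_filter, mem_univ, true_and] at *
    exact le_trans hu (hy'y u)
  have hFanti : Antitone F := by
    intro s t hst
    apply hf_mono
    intro u hu
    simp only [mem_filter, mem_univ, true_and] at *
    exact le_trans hst hu
  have hF'anti : Antitone F' := by
    intro s t hst
    apply hf_mono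
    intro u hu
    simp only [mem_filter, mem_univ, true_and] at *
    exact le_trans hst hu
  have hFi : IntervalIntegrable F MeasureTheory.volume 0 1 := hFanti.intervalIntegrable
  have hF'i : IntervalIntegrable F' MeasureTheory.volume 0 1 := hF'anti.intervalIntegrable
  have hgi : IntervalIntegrable (fun t => F' t - F t) MeasureTheory.volume 0 1 := hF'i.sub hFi
  have hcont : ContinuousOn (fun t : ℝ => (1 - t) / (t + alpha)) (Set.uIcc (0:ℝ) 1) := by
    apply ContinuousOn.div
    · fun_prop
    · fun_prop
    · intro t ht
      rw [Set.uIcc_of_le (by norm_num : (0:ℝ) ≤ 1)] at ht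
      have := ht.1
      positivity
  rcases hcase with h1 | h2
  · rw [h1]
    have : (1:ℝ) - 1 = 0 := by norm_num
    rw [this]
    apply intervalIntegral.integral_nonneg (by norm_num)
    intro t ht
    have h1t : t + alpha > 0 := by have := ht.1; positivity
    apply mul_nonneg
    · apply div_nonneg (by linarith [ht.2]) (le_of_lt h1t)
    · linarith [hFle t]
  · have hint : (∫ t in (0:ℝ)..1, (F' t - F t)) = a + alpha := by
      rw [intervalIntegral.integral_sub hF'i hFi]
      unfold lovasz at h2
      exact h2
    have haα : a + alpha ≠ 0 := by positivity
    have key : (∫ t in (0:ℝ)..1, ((1 - a) / (a + alpha)) * (F' t - F t)) ≤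
        ∫ t in (0:ℝ)..1, ((1 - t) / (t + alpha)) * (F' t - F t) := by
      apply intervalIntegral.integral_mono_on (by norm_num)
      · exact hgi.const_mul _
      · exact hgi.continuousOn_mul hcont
      · intro t ht
        obtain ⟨ht0, ht1⟩ := ht
        rcases le_or_gt t a with hta | hat
        · apply mul_le_mul_of_nonneg_right _ (sub_nonneg.2 (hFle t))
          rw [div_le_div_iff₀ (by linarith) (by linarith)]
          nlinarith
        · have hFF : F' t = F t := by
            simp only [hF, hF']
            congr 1
            apply filter_congr
            intro u _
            rw [hy' u]
            split
            · rw [le_max_iff]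
              constructor
              · rintro (h | h)
                · exact h
                · linarith
              · intro h; exact Or.inl h
            · rfl
          rw [hFF]
          simp
    calc 1 - a = ((1 - a) / (a + alpha)) * (a + alpha) := by field_simp
      _ = ∫ t in (0:ℝ)..1, ((1 - a) / (a + alpha)) * (F' t - F t) := by
          rw [intervalIntegral.integral_const_mul, hint]
      _ ≤ _ := key
end

section
/- Restriction inequality for the Lovász extension: let f be a nonnegative monotone submodular set function on subsets of a finite set L, let C ⊆ L, and let y, y' ∈ [0,1]^L satisfy y_u ≤ y'_u for all u ∈ L and {u ∈ L : y_u < y'_u} ⊆ C. Then f̂(y') − f̂(y) ≤ f̂(y'|_C) − f̂(y|_C), where for w ∈ [0,1]^L the restriction w|_C is defined by (w|_C)_u = w_u for u ∈ C and (w|_C)_u = 0 for u ∉ C. -/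
/-!
For `0 < t`, the superlevel set of `w|_C` at `t` is the superlevel set of `w` intersected with `C`.
So, writing `A ⊆ B` for the superlevel sets of `y ≤ y'`, the integrands at `t` compare
`f B - f A` with `f (B ∩ C) - f (A ∩ C)`. Since `B \ A ⊆ C`, we have `A ∪ (B ∩ C) = B` and
`A ∩ (B ∩ C) = A ∩ C`, and submodularity applied to `A` and `B ∩ C` is exactly the pointwise
inequality. Integrating over `t ∈ (0, 1)` gives the claim.
-/

open Finset

def restrict {L : Type*} [DecidableEq L] (w : L → ℝ) (C : Finset L) : L → ℝ :=
  fun u => if u ∈ C then w u else 0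

theorem sub_le_sub_inter_of_submodular {L : Type*} [DecidableEq L] {f : Finset L → ℝ}
    (hf_submod : ∀ A B : Finset L, f (A ∪ B) + f (A ∩ B) ≤ f A + f B)
    {A B C : Finset L} (hAB : A ⊆ B) (hBAC : B ⊆ A ∪ C) :
    f B - f A ≤ f (B ∩ C) - f (A ∩ C) := by
  have hunion : A ∪ (B ∩ C) = B := by
    refine Subset.antisymm (union_subset hAB inter_subset_left) fun u hu => ?_
    rcases mem_union.mp (hBAC hu) with huA | huC
    · exact mem_union_left _ huA
    · exact mem_union_right _ (mem_inter.mpr ⟨hu, huC⟩)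
  have hinter : A ∩ (B ∩ C) = A ∩ C := by
    rw [← inter_assoc, inter_eq_left.mpr hAB]
  have := hf_submod A (B ∩ C)
  rw [hunion, hinter] at this
  linarith

section Superlevel

variable {L : Type*} [Fintype L]

theorem antitone_filter_le_apply (z : L → ℝ) :
    Antitone fun t : ℝ => univ.filter fun u => t ≤ z u :=
  fun _ _ hst _ hu => by
    simp only [mem_filter, mem_univ, true_and] at hu ⊢
    exact hst.trans hu

theorem filter_le_restrict [DecidableEq L] {t : ℝ} (ht : 0 < t) (z : L → ℝ) (C : Finset L) :
    (univ.filter fun u => t ≤ restrict z C u) = (univ.filter fun u => t ≤ z u) ∩ C := by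
  ext u
  simp only [mem_filter, mem_inter, mem_univ, true_and]
  by_cases hu : u ∈ C <;> simp [_root_.restrict, hu, ht]

theorem intervalIntegrable_lovasz_integrand {f : Finset L → ℝ} (hf_mono : Monotone f)
    (z : L → ℝ) (a b : ℝ) :
    IntervalIntegrable (fun t => f (univ.filter fun u => t ≤ z u)) MeasureTheory.volume a b :=
  (hf_mono.comp_antitone (antitone_filter_le_apply z)).intervalIntegrable

theorem superlevel_sub_le_sub_restrict [DecidableEq L] {f : Finset L → ℝ}
    (hf_submod : ∀ A B : Finset L, f (A ∪ B) + f (A ∩ B) ≤ f A + f B)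
    {C : Finset L} {y y' : L → ℝ} (hle : ∀ u, y u ≤ y' u)
    (hdiff : ∀ u, y u < y' u → u ∈ C)
    {t : ℝ} (ht : 0 < t) :
    f (univ.filter fun u => t ≤ y' u) - f (univ.filter fun u => t ≤ y u) ≤
      f (univ.filter fun u => t ≤ restrict y' C u) -
        f (univ.filter fun u => t ≤ restrict y C u) := by
  rw [filter_le_restrict ht, filter_le_restrict ht]
  refine sub_le_sub_inter_of_submodular hf_submod
    (monotone_filter_right _ fun u _ hu => hu.trans (hle u)) fun u hu => ?_
  simp only [mem_union, mem_filter, mem_univ, true_and] at hu ⊢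
  by_cases htu : t ≤ y u
  · exact Or.inl htu
  · exact Or.inr (hdiff u ((not_le.mp htu).trans_le hu))

end Superlevel

theorem stmt11_general {L : Type*} [Fintype L] [DecidableEq L] (f : Finset L → ℝ)
    (hf_mono : ∀ A B : Finset L, A ⊆ B → f A ≤ f B)
    (hf_submod : ∀ A B : Finset L, f (A ∪ B) + f (A ∩ B) ≤ f A + f B)
    (C : Finset L) (y y' : L → ℝ)
    (hle : ∀ u, y u ≤ y' u)
    (hdiff : ∀ u, y u < y' u → u ∈ C) :
    lovasz f y' - lovasz f y ≤ lovasz f (restrict y' C) - lovasz f (restrict y C) := by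
  have hint (z : L → ℝ) := intervalIntegrable_lovasz_integrand (fun A B => hf_mono A B) z 0 1
  rw [sub_le_sub_iff, lovasz, lovasz, lovasz, lovasz,
    ← intervalIntegral.integral_add (hint y') (hint _),
    ← intervalIntegral.integral_add (hint _) (hint y)]
  refine intervalIntegral.integral_mono_on_of_le_Ioo zero_le_one
    ((hint y').add (hint _)) ((hint _).add (hint y)) fun t ht => ?_
  linarith [superlevel_sub_le_sub_restrict hf_submod hle hdiff ht.1]

/-- Restriction inequality for the Lovász extension: if `y ≤ y'` coordinatewise and all
coordinates where they differ lie in `C`, then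
`f̂(y') - f̂(y) ≤ f̂(y'|_C) - f̂(y|_C)`. -/
theorem stmt11 {L : Type*} [Fintype L] [DecidableEq L] (f : Finset L → ℝ)
    (hf_nonneg : ∀ S : Finset L, 0 ≤ f S)
    (hf_mono : ∀ A B : Finset L, A ⊆ B → f A ≤ f B)
    (hf_submod : ∀ A B : Finset L, f (A ∪ B) + f (A ∩ B) ≤ f A + f B)
    (C : Finset L) (y y' : L → ℝ)
    (hy : ∀ u, y u ∈ Set.Icc (0:ℝ) 1) (hy' : ∀ u, y' u ∈ Set.Icc (0:ℝ) 1)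
    (hle : ∀ u, y u ≤ y' u)
    (hdiff : ∀ u, y u < y' u → u ∈ C) :
    lovasz f y' - lovasz f y ≤ lovasz f (restrict y' C) - lovasz f (restrict y C) :=
  stmt11_general f hf_mono hf_submod C y y' hle hdiff
end

section
/- Lossless randomized rounding of fractional vertex covers: let G = (L,R,E) be a finite bipartite graph, f a nonnegative monotone submodular set function on subsets of L, and y : L → [0,1], z : R → [0,1] with y_u + z_v ≥ 1 for every edge (u,v) ∈ E. For γ ∈ [0,1] let C(γ) = {u ∈ L : y_u ≥ γ} ∪ {v ∈ R : z_v ≥ 1−γ}. Then C(γ) is a vertex cover of G for every γ ∈ [0,1], and ∫₀¹ f(C(γ)∩L) dγ + ∫₀¹ |C(γ)∩R| dγ = f̂(y) + ∑_{v∈R} z_v. -/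
open Finset

/-- `(CL, CR)` is a vertex cover of the bipartite graph with edge set `E ⊆ L × R`. -/
def IsVertexCover {L R : Type*} (E : Finset (L × R)) (CL : Finset L) (CR : Finset R) : Prop :=
  ∀ e ∈ E, e.1 ∈ CL ∨ e.2 ∈ CR

/-! If `y u < γ` then `z v ≥ 1 - γ` on every edge `(u, v)`, so each threshold set is a vertex
cover. The left-hand integral is `f̂(y)` by definition, and the substitution `γ ↦ 1 - γ` turns
the right-hand one into the Lovász extension of the cardinality function at `z`; since
cardinality is modular, its Lovász extension is linear, equal to `∑ v, z v`. -/

open MeasureTheory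

lemma integral_indicator_Iic_const {c : ℝ} (hc : c ∈ Set.Icc (0:ℝ) 1) (w : ℝ) :
    ∫ t in (0:ℝ)..1, (Set.Iic c).indicator (fun _ => w) t = c * w :=
  (intervalIntegral.integral_indicator hc).trans (by simp)

lemma lovasz_modular {R : Type*} [Fintype R] (w z : R → ℝ)
    (hz : ∀ v, z v ∈ Set.Icc (0:ℝ) 1) :
    lovasz (fun S => ∑ v ∈ S, w v) z = ∑ v, z v * w v := by
  have hsum (t : ℝ) : ∑ v ∈ univ.filter (fun v => t ≤ z v), w v
      = ∑ v, (Set.Iic (z v)).indicator (fun _ => w v) t := by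
    rw [sum_filter]
    rfl
  simp_rw [lovasz, hsum]
  rw [intervalIntegral.integral_finsetSum fun v _ => intervalIntegrable_iff.2
    ((integrableOn_const measure_Ioc_lt_top.ne).indicator measurableSet_Iic)]
  exact sum_congr rfl fun v _ => integral_indicator_Iic_const (hz v) (w v)

lemma lovasz_card {R : Type*} [Fintype R] (z : R → ℝ) (hz : ∀ v, z v ∈ Set.Icc (0:ℝ) 1) :
    lovasz (fun S => (S.card : ℝ)) z = ∑ v, z v := by
  simpa using lovasz_modular (fun _ => 1) z hz

lemma isVertexCover_threshold {L R : Type*} [Fintype L] [Fintype R] (E : Finset (L × R))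
    (y : L → ℝ) (z : R → ℝ) (hcover : ∀ e ∈ E, 1 ≤ y e.1 + z e.2) (γ : ℝ) :
    IsVertexCover E (univ.filter fun u => γ ≤ y u) (univ.filter fun v => 1 - γ ≤ z v) := by
  intro e he
  simp only [mem_filter, mem_univ, true_and]
  by_contra! h
  linarith [hcover e he]

theorem stmt12_general {L R : Type*} [Fintype L] [Fintype R]
    (E : Finset (L × R)) (f : Finset L → ℝ)
    (y : L → ℝ)
    (z : R → ℝ) (hz : ∀ v, z v ∈ Set.Icc (0:ℝ) 1)
    (hcover : ∀ e ∈ E, 1 ≤ y e.1 + z e.2) :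
    (∀ γ ∈ Set.Icc (0:ℝ) 1,
      IsVertexCover E (Finset.univ.filter fun u => γ ≤ y u)
        (Finset.univ.filter fun v => 1 - γ ≤ z v)) ∧
    (∫ γ in (0:ℝ)..1, f (Finset.univ.filter fun u => γ ≤ y u)) +
        (∫ γ in (0:ℝ)..1, ((Finset.univ.filter fun v : R => 1 - γ ≤ z v).card : ℝ)) =
      lovasz f y + ∑ v : R, z v := by
  refine ⟨fun γ _ => isVertexCover_threshold E y z hcover γ, ?_⟩
  have hR : (∫ γ in (0:ℝ)..1, ((univ.filter fun v : R => 1 - γ ≤ z v).card : ℝ))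
      = lovasz (fun S => (S.card : ℝ)) z := by
    simpa only [sub_self, sub_zero, lovasz] using intervalIntegral.integral_comp_sub_left
      (fun t => ((univ.filter fun v : R => t ≤ z v).card : ℝ)) (a := 0) (b := 1) 1
  rw [hR, lovasz_card z hz]
  rfl

/-- Lossless randomized rounding of fractional vertex covers: for each threshold
`γ ∈ [0,1]`, `C(γ) = {u : y u ≥ γ} ∪ {v : z v ≥ 1-γ}` is a vertex cover, and in
expectation over uniform `γ` the rounded cover costs exactly `f̂(y) + ∑_v z_v`. -/
theorem stmt12 {L R : Type*} [Fintype L] [Fintype R] [DecidableEq L] [DecidableEq R]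
    (E : Finset (L × R)) (f : Finset L → ℝ)
    (hf_nonneg : ∀ S : Finset L, 0 ≤ f S)
    (hf_mono : ∀ A B : Finset L, A ⊆ B → f A ≤ f B)
    (hf_submod : ∀ A B : Finset L, f (A ∪ B) + f (A ∩ B) ≤ f A + f B)
    (y : L → ℝ) (hy : ∀ u, y u ∈ Set.Icc (0:ℝ) 1)
    (z : R → ℝ) (hz : ∀ v, z v ∈ Set.Icc (0:ℝ) 1)
    (hcover : ∀ e ∈ E, 1 ≤ y e.1 + z e.2) :
    (∀ γ ∈ Set.Icc (0:ℝ) 1,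
      IsVertexCover E (Finset.univ.filter fun u => γ ≤ y u)
        (Finset.univ.filter fun v => 1 - γ ≤ z v)) ∧
    (∫ γ in (0:ℝ)..1, f (Finset.univ.filter fun u => γ ≤ y u)) +
        (∫ γ in (0:ℝ)..1, ((Finset.univ.filter fun v : R => 1 - γ ≤ z v).card : ℝ)) =
      lovasz f y + ∑ v : R, z v :=
  stmt12_general E f y z hz hcover
end

section
/- Lovász extension increment at a new bottom level: let f be a nonnegative monotone submodular set function on subsets of a finite set L, let y ∈ [0,1]^L, let S = {u ∈ L : y_u > 0}, let W ⊆ L \ S, and let c ∈ [0,1] satisfy c ≤ y_u for every u ∈ S. Define y' by y'_w = c for w ∈ W and y'_u = y_u for u ∉ W. Then f̂(y') = f̂(y) + c·(f(S ∪ W) − f(S)). -/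
open Finset

/-
The integrand `t ↦ f {u : t ≤ y u}` of the Lovász extension is a step function. For
`0 < t < c` the superlevel set of `y` is `S`, since every positive coordinate is at least `c`,
while that of `y'` is `S ∪ W`. For `t > c` the two superlevel sets coincide: the coordinates in
`W` are at most `c` in `y'` and nonpositive in `y`. So splitting `∫₀¹` at `c` changes only the
first piece, from `c · f S` to `c · f (S ∪ W)`.
-/

theorem intervalIntegral_eq_add_of_eqOn_Ioo {g g' : ℝ → ℝ} {a a' c : ℝ}
    (hg : IntervalIntegrable g MeasureTheory.volume 0 1)
    (hg' : IntervalIntegrable g' MeasureTheory.volume 0 1)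
    (hc0 : 0 ≤ c) (hc1 : c ≤ 1)
    (hlow : Set.EqOn g (fun _ => a) (Set.Ioo 0 c))
    (hlow' : Set.EqOn g' (fun _ => a') (Set.Ioo 0 c))
    (hhigh : Set.EqOn g' g (Set.Ioo c 1)) :
    ∫ t in (0 : ℝ)..1, g' t = (∫ t in (0 : ℝ)..1, g t) + c * (a' - a) := by
  have hc : c ∈ Set.uIcc (0 : ℝ) 1 := by rw [Set.uIcc_of_le zero_le_one]; exact ⟨hc0, hc1⟩
  rw [← intervalIntegral.integral_add_adjacent_intervals
      (hg.mono_set (Set.uIcc_subset_uIcc_left hc)) (hg.mono_set (Set.uIcc_subset_uIcc_right hc)),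
    ← intervalIntegral.integral_add_adjacent_intervals
      (hg'.mono_set (Set.uIcc_subset_uIcc_left hc)) (hg'.mono_set (Set.uIcc_subset_uIcc_right hc)),
    intervalIntegral.integral_congr_Ioo_of_le hc0 hlow,
    intervalIntegral.integral_congr_Ioo_of_le hc0 hlow',
    intervalIntegral.integral_congr_Ioo_of_le hc1 hhigh]
  simp only [intervalIntegral.integral_const, smul_eq_mul, sub_zero]
  ring

section SuperlevelSet

variable {L : Type*} [Fintype L]

noncomputable def superlevelSet (y : L → ℝ) (t : ℝ) : Finset L := univ.filter fun u => t ≤ y u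

@[simp]
theorem mem_superlevelSet {y : L → ℝ} {t : ℝ} {u : L} : u ∈ superlevelSet y t ↔ t ≤ y u := by
  simp [superlevelSet]

theorem lovasz_eq_integral_superlevelSet (f : Finset L → ℝ) (y : L → ℝ) :
    lovasz f y = ∫ t in (0 : ℝ)..1, f (superlevelSet y t) :=
  rfl

theorem superlevelSet_antitone (y : L → ℝ) : Antitone (superlevelSet y) :=
  fun _ _ hst _ => by simpa only [mem_superlevelSet] using hst.trans

theorem intervalIntegrable_comp_superlevelSet {f : Finset L → ℝ} (hf : Monotone f) (y : L → ℝ)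
    (a b : ℝ) : IntervalIntegrable (fun t => f (superlevelSet y t)) MeasureTheory.volume a b :=
  (hf.comp_antitone (superlevelSet_antitone y)).intervalIntegrable

theorem superlevelSet_eq_filter_pos {y : L → ℝ} {t : ℝ} (ht : 0 < t)
    (hty : ∀ u, 0 < y u → t ≤ y u) : superlevelSet y t = univ.filter fun u => 0 < y u := by
  ext u
  simp only [mem_superlevelSet, mem_filter, mem_univ, true_and]
  exact ⟨ht.trans_le, hty u⟩

theorem disjoint_superlevelSet {y : L → ℝ} {W : Finset L} (hW : ∀ u ∈ W, y u ≤ 0) {t : ℝ}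
    (ht : 0 < t) : Disjoint (superlevelSet y t) W :=
  disjoint_left.2 fun u hu huW => (mem_superlevelSet.1 hu).not_gt (ht.trans_le' (hW u huW))

variable [DecidableEq L] {y y' : L → ℝ} {W : Finset L} {c t : ℝ}

theorem superlevelSet_of_le (hy' : ∀ u, y' u = if u ∈ W then c else y u) (ht : t ≤ c) :
    superlevelSet y' t = superlevelSet y t ∪ W := by
  ext u
  by_cases hu : u ∈ W <;> simp [hy', hu, ht]

theorem superlevelSet_of_lt (hy' : ∀ u, y' u = if u ∈ W then c else y u) (ht : c < t) :
    superlevelSet y' t = superlevelSet y t \ W := by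
  ext u
  by_cases hu : u ∈ W <;> simp [hy', hu, ht]

end SuperlevelSet

theorem stmt13_general {L : Type*} [Fintype L] [DecidableEq L] (f : Finset L → ℝ)
    (hf_mono : ∀ A B : Finset L, A ⊆ B → f A ≤ f B)
    (y : L → ℝ)
    (S : Finset L) (hS : S = Finset.univ.filter fun u => 0 < y u)
    (W : Finset L) (hW : W ⊆ Finset.univ \ S)
    (c : ℝ) (hc : c ∈ Set.Icc (0:ℝ) 1) (hcS : ∀ u ∈ S, c ≤ y u)
    (y' : L → ℝ) (hy' : ∀ u, y' u = if u ∈ W then c else y u) :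
    lovasz f y' = lovasz f y + c * (f (S ∪ W) - f S) := by
  obtain ⟨hc0, hc1⟩ := hc
  have hf : Monotone f := fun A B => hf_mono A B
  have hW_nonpos : ∀ u ∈ W, y u ≤ 0 := fun u hu => by simpa [hS] using hW hu
  have hlow : ∀ t ∈ Set.Ioo 0 c, superlevelSet y t = S := fun t ht => by
    rw [hS]
    exact superlevelSet_eq_filter_pos ht.1 fun u hu => ht.2.le.trans (hcS u (by simpa [hS]))
  rw [lovasz_eq_integral_superlevelSet, lovasz_eq_integral_superlevelSet]
  refine intervalIntegral_eq_add_of_eqOn_Ioo (intervalIntegrable_comp_superlevelSet hf y 0 1)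
    (intervalIntegrable_comp_superlevelSet hf y' 0 1) hc0 hc1
    (fun t ht => congrArg f (hlow t ht)) (fun t ht => ?_) (fun t ht => ?_)
  · simp only [superlevelSet_of_le hy' ht.2.le, hlow t ht]
  · have hdisj := disjoint_superlevelSet hW_nonpos (hc0.trans_lt ht.1)
    simp only [superlevelSet_of_lt hy' ht.1, sdiff_eq_self_of_disjoint hdisj]

/-- Lovász extension increment at a new bottom level: let `S = {u : y u > 0}`,
`W ⊆ L \ S`, and `c ∈ [0,1]` with `c ≤ y u` for all `u ∈ S`. Raising the coordinates of
`W` to `c` increases the Lovász extension by exactly `c · (f(S ∪ W) - f(S))`. -/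
theorem stmt13 {L : Type*} [Fintype L] [DecidableEq L] (f : Finset L → ℝ)
    (hf_nonneg : ∀ S : Finset L, 0 ≤ f S)
    (hf_mono : ∀ A B : Finset L, A ⊆ B → f A ≤ f B)
    (hf_submod : ∀ A B : Finset L, f (A ∪ B) + f (A ∩ B) ≤ f A + f B)
    (y : L → ℝ) (hy : ∀ u, y u ∈ Set.Icc (0:ℝ) 1)
    (S : Finset L) (hS : S = Finset.univ.filter fun u => 0 < y u)
    (W : Finset L) (hW : W ⊆ Finset.univ \ S)
    (c : ℝ) (hc : c ∈ Set.Icc (0:ℝ) 1) (hcS : ∀ u ∈ S, c ≤ y u)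
    (y' : L → ℝ) (hy' : ∀ u, y' u = if u ∈ W then c else y u) :
    lovasz f y' = lovasz f y + c * (f (S ∪ W) - f S) :=
  stmt13_general f hf_mono y S hS W hW c hc hcS y' hy'
end
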